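/- arXiv:1603.01040 — 4 statements merged into one kernel-verified Lean document; each statement's English description precedes it below -/
import Mathlib

section
/- Let γ be a natural number and P a γ-pluriassociative algebra admitting a b-wire-unit e for some b ∈ {1,…,γ}. Then for every a ∈ {1,…,b}, the four operations ⊣_a, ⊣_b, ⊢_a and ⊢_b of P coincide, and e is also an a-wire-unit of P. -/
/-- A bilinear binary operation. -/
def IsBilinear (K P : Type) [Field K] [AddCommGroup P] [Module K P]
    (op : P → P → P) : Prop :=
  (∀ x y z : P, op (x + y) z = op x z + op y z) ∧
  (∀ x y z : P, op x (y + z) = op x y + op x z) ∧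
  (∀ (c : K) (x y : P), op (c • x) y = c • op x y) ∧
  (∀ (c : K) (x y : P), op x (c • y) = c • op x y)

/-- The data of a `γ`-pluriassociative algebra: bilinear operations `⊣_a`
(`dl a`) and `⊢_a` (`dr a`) for `a ∈ {1, …, γ}` satisfying the five relations
of `γ`-pluriassociative algebras. -/
def IsPluriAssoc (K P : Type) [Field K] [AddCommGroup P] [Module K P] (γ : ℕ)
    (dl dr : ℕ → P → P → P) : Prop :=
  (∀ a : ℕ, 1 ≤ a → a ≤ γ → IsBilinear K P (dl a) ∧ IsBilinear K P (dr a)) ∧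
  (∀ a a' : ℕ, 1 ≤ a → a ≤ γ → 1 ≤ a' → a' ≤ γ → ∀ x y z : P,
    dl a (dr a' x y) z = dr a' x (dl a y z) ∧
    dl a (dl (max a a') x y) z = dl a x (dr a' y z) ∧
    dr a (dl a' x y) z = dr a x (dr (max a a') y z) ∧
    dl (max a a') (dl a x y) z = dl a x (dl a' y z) ∧
    dr a (dr a' x y) z = dr (max a a') x (dr a y z))

/-- If a `γ`-pluriassociative algebra has a `b`-wire-unit `e`, then for every
`a ≤ b` the operations `⊣_a`, `⊣_b`, `⊢_a`, `⊢_b` coincide and `e` is also an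
`a`-wire-unit. -/
theorem stmt13 (K : Type) [Field K] [CharZero K] (γ : ℕ)
    (P : Type) [AddCommGroup P] [Module K P]
    (dl dr : ℕ → P → P → P) (hP : IsPluriAssoc K P γ dl dr)
    (b : ℕ) (hb1 : 1 ≤ b) (hb2 : b ≤ γ) (e : P)
    (he : ∀ x : P, dl b e x = x ∧ dr b x e = x) :
    ∀ a : ℕ, 1 ≤ a → a ≤ b →
      (∀ x y : P, dl a x y = dl b x y) ∧
      (∀ x y : P, dl a x y = dr a x y) ∧
      (∀ x y : P, dr a x y = dr b x y) ∧
      (∀ x : P, dl a e x = x ∧ dr a x e = x) := by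
  intro a ha1 ha2
  have ha2' : a ≤ γ := ha2.trans hb2
  have hmax : max b a = b := max_eq_left ha2
  have rel := fun x y z => hP.2 b a hb1 hb2 ha1 ha2' x y z
  have hdl : ∀ x y : P, dl a x y = dl b x y := by
    intro x y
    have h4 := (rel e x y).2.2.2.1
    rw [hmax, (he x).1, (he (dl a x y)).1] at h4
    exact h4.symm
  have hdra : ∀ x y : P, dr a x y = dr b x y := by
    intro x y
    have h5 := (rel x y e).2.2.2.2
    rw [hmax, (he y).2, (he (dr a x y)).2] at h5
    exact h5
  have hdlr : ∀ x y : P, dl a x y = dr a x y := by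
    intro x y
    have h3 := (rel x y e).2.2.1
    rw [hmax, (he y).2, (he (dl a x y)).2] at h3
    rw [h3, hdra]
  refine ⟨hdl, hdlr, hdra, fun x => ⟨?_, ?_⟩⟩
  · rw [hdl]; exact (he x).1
  · rw [hdra]; exact (he x).2
end

section
/- Let γ be a natural number and P a γ-pluriassociative algebra admitting a b-wire-unit e for some b ∈ {1,…,γ}. Then e is the only wire-unit of P (for every b' ∈ {1,…,γ}, any b'-wire-unit of P equals e), and for every a ∈ {1,…,b}, any a-bar-unit of P equals e. -/
/-- If a `γ`-pluriassociative algebra has a `b`-wire-unit `e`, then `e` is its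
only wire-unit, and for every `a ≤ b`, any `a`-bar-unit equals `e`. -/
theorem stmt14 (K : Type) [Field K] [CharZero K] (γ : ℕ)
    (P : Type) [AddCommGroup P] [Module K P]
    (dl dr : ℕ → P → P → P) (hP : IsPluriAssoc K P γ dl dr)
    (b : ℕ) (hb1 : 1 ≤ b) (hb2 : b ≤ γ) (e : P)
    (he : ∀ x : P, dl b e x = x ∧ dr b x e = x) :
    (∀ b' : ℕ, 1 ≤ b' → b' ≤ γ → ∀ e' : P,
      (∀ x : P, dl b' e' x = x ∧ dr b' x e' = x) → e' = e) ∧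
    (∀ a : ℕ, 1 ≤ a → a ≤ b → ∀ e' : P,
      (∀ x : P, dl a x e' = x ∧ dr a e' x = x) → e' = e) := by
  obtain ⟨hbil, hrel⟩ := hP
  have hdl : ∀ a' : ℕ, 1 ≤ a' → a' ≤ γ → ∀ y z : P, dl (max b a') y z = dl a' y z := by
    intro a' h1 h2 y z
    have h := (hrel b a' hb1 hb2 h1 h2 e y z).2.2.2.1
    rwa [(he y).1, (he (dl a' y z)).1] at h
  have hdr : ∀ a' : ℕ, 1 ≤ a' → a' ≤ γ → ∀ x y : P, dr (max b a') x y = dr a' x y := by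
    intro a' h1 h2 x y
    have h := (hrel b a' hb1 hb2 h1 h2 x y e).2.2.2.2
    rw [(he (dr a' x y)).2, (he y).2] at h
    exact h.symm
  constructor
  · intro b' hb'1 hb'2 e' he'
    have hdl' : ∀ y z : P, dl (max b' b) y z = dl b y z := by
      intro y z
      have h := (hrel b' b hb'1 hb'2 hb1 hb2 e' y z).2.2.2.1
      rwa [(he' y).1, (he' (dl b y z)).1] at h
    have hdlbb' : ∀ y z, dl b' y z = dl b y z := by
      intro y z
      rw [← hdl b' hb'1 hb'2 y z, max_comm, hdl' y z]
    have h := (hrel b b hb1 hb2 hb1 hb2 e' e e).1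
    rw [(he e').2, (he e).1] at h
    rw [← hdlbb', (he' e).1, (he e').2] at h
    exact h.symm
  · intro a ha1 hab e' he'
    have haγ : a ≤ γ := hab.trans hb2
    have h := hdl a ha1 haγ e e'
    rw [max_eq_left hab] at h
    rw [(he e').1, (he' e).1] at h
    exact h
end

section
/- Let γ be a natural number and M a γ-multiprojection algebra with operations ⋆_a and endomorphisms π_a (a ∈ {1,…,γ}). Then the vector space M endowed with the bilinear operations x ⊣_a y := x ⋆_a π_a(y) and x ⊢_a y := π_a(x) ⋆_a y, for a ∈ {1,…,γ}, is a γ-pluriassociative algebra. -/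
/-- The data of a `γ`-multiassociative algebra: bilinear operations `⋆_a` for
`a ∈ {1, …, γ}` satisfying
`(x ⋆_a y) ⋆_b z = (x ⋆_b y) ⋆_{a'} z = x ⋆_{a''} (y ⋆_b z) = x ⋆_b (y ⋆_{a'''} z)`
for all `a, a', a'', a''' ≤ b` in `{1, …, γ}`. -/
def IsMultiAssoc (K M : Type) [Field K] [AddCommGroup M] [Module K M] (γ : ℕ)
    (star : ℕ → M → M → M) : Prop :=
  (∀ a : ℕ, 1 ≤ a → a ≤ γ → IsBilinear K M (star a)) ∧
  (∀ b : ℕ, 1 ≤ b → b ≤ γ →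
    ∀ a a' a'' a''' : ℕ, 1 ≤ a → a ≤ b → 1 ≤ a' → a' ≤ b →
      1 ≤ a'' → a'' ≤ b → 1 ≤ a''' → a''' ≤ b → ∀ x y z : M,
      star b (star a x y) z = star a' (star b x y) z ∧
      star b (star a x y) z = star a'' x (star b y z) ∧
      star b (star a x y) z = star b x (star a''' y z))

/-- The data of a `γ`-multiprojection algebra: a `γ`-multiassociative algebra
together with linear endomorphisms `π_a` (`a ∈ {1, …, γ}`) that are morphisms
for all the products and satisfy `π_a ∘ π_{a'} = π_{max(a,a')}`. -/
def IsMultiProj (K M : Type) [Field K] [AddCommGroup M] [Module K M] (γ : ℕ)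
    (star : ℕ → M → M → M) (pi : ℕ → M → M) : Prop :=
  IsMultiAssoc K M γ star ∧
  (∀ a : ℕ, 1 ≤ a → a ≤ γ →
    (∀ x y : M, pi a (x + y) = pi a x + pi a y) ∧
    (∀ (c : K) (x : M), pi a (c • x) = c • pi a x)) ∧
  (∀ a b : ℕ, 1 ≤ a → a ≤ γ → 1 ≤ b → b ≤ γ → ∀ x y : M,
    pi a (star b x y) = star b (pi a x) (pi a y)) ∧
  (∀ a a' : ℕ, 1 ≤ a → a ≤ γ → 1 ≤ a' → a' ≤ γ → ∀ x : M,
    pi a (pi a' x) = pi (max a a') x)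

/-- The construction `M`: a `γ`-multiprojection algebra, endowed with
`x ⊣_a y := x ⋆_a π_a(y)` and `x ⊢_a y := π_a(x) ⋆_a y`, is a
`γ`-pluriassociative algebra. -/
theorem stmt16 (K : Type) [Field K] [CharZero K] (γ : ℕ)
    (M : Type) [AddCommGroup M] [Module K M]
    (star : ℕ → M → M → M) (pi : ℕ → M → M)
    (hM : IsMultiProj K M γ star pi) :
    IsPluriAssoc K M γ (fun a x y => star a x (pi a y))
      (fun a x y => star a (pi a x) y) := by

  obtain ⟨⟨hbil, hassoc⟩, hlin, hmor, hcomp⟩ := hM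
  have key : ∀ b a c : ℕ, 1 ≤ a → a ≤ b → 1 ≤ c → c ≤ b → b ≤ γ →
      ∀ x y z : M,
      star b (star a x y) z = star a (star b x y) z ∧
      star b (star a x y) z = star c x (star b y z) ∧
      star b (star a x y) z = star b x (star c y z) := by
    intro b a c h1 h2 h3 h4 h5 x y z
    exact hassoc b (le_trans h1 h2) h5 a a c c h1 h2 h1 h2 h3 h4 h3 h4 x y z
  constructor
  · intro a h1 h2
    obtain ⟨B1, B2, B3, B4⟩ := hbil a h1 h2
    obtain ⟨L1, L2⟩ := hlin a h1 h2
    exact ⟨⟨fun x y z => B1 x y (pi a z),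
        fun x y z => by dsimp only; rw [L1, B2],
        fun c x y => B3 c x (pi a y),
        fun c x y => by dsimp only; rw [L2, B4]⟩,
      ⟨fun x y z => by dsimp only; rw [L1, B1],
        fun x y z => B2 (pi a x) y z,
        fun c x y => by dsimp only; rw [L2, B3],
        fun c x y => B4 c (pi a x) y⟩⟩
  · intro a a' h1 h2 h3 h4 x y z
    dsimp only
    rcases le_total a a' with h | h
    · have hm : max a a' = a' := max_eq_right h
      refine ⟨?_, ?_, ?_, ?_, ?_⟩
      · have K := key a' a a h1 h h1 h h4 (pi a' x) y (pi a z)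
        exact K.1.symm.trans K.2.2
      · rw [hm, hmor a a' h1 h2 h3 h4, hcomp a a' h1 h2 h3 h4, hm]
        have K := key a' a a h1 h h1 h h4 x (pi a' y) (pi a z)
        exact K.1.symm.trans K.2.1
      · rw [hm, hmor a a' h1 h2 h3 h4, hcomp a a' h1 h2 h3 h4, hm]
        have K := key a' a a h1 h h1 h h4 (pi a x) (pi a' y) z
        exact K.1.symm.trans K.2.1
      · rw [hm, hmor a a' h1 h2 h3 h4, hcomp a a' h1 h2 h3 h4, hm]
        exact (key a' a a h1 h h1 h h4 x (pi a y) (pi a' z)).2.1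
      · rw [hm, hmor a a' h1 h2 h3 h4, hcomp a a' h1 h2 h3 h4, hm]
        have K := key a' a a h1 h h1 h h4 (pi a' x) (pi a y) z
        exact K.1.symm.trans K.2.2
    · have hm : max a a' = a := max_eq_left h
      refine ⟨?_, ?_, ?_, ?_, ?_⟩
      · exact (key a a' a' h3 h h3 h h2 (pi a' x) y (pi a z)).2.1
      · rw [hm, hmor a a' h1 h2 h3 h4, hcomp a a' h1 h2 h3 h4, hm]
        exact (key a a a' h1 le_rfl h3 h h2 x (pi a y) (pi a z)).2.2
      · rw [hm, hmor a a' h1 h2 h3 h4, hcomp a a' h1 h2 h3 h4, hm]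
        exact (key a a' a h3 h h1 le_rfl h2 (pi a x) (pi a y) z).2.2
      · rw [hm, hmor a a' h1 h2 h3 h4, hcomp a a' h1 h2 h3 h4, hm]
        exact (key a a a' h1 le_rfl h3 h h2 x (pi a y) (pi a z)).2.2
      · rw [hm, hmor a a' h1 h2 h3 h4, hcomp a a' h1 h2 h3 h4, hm]
        exact (key a a' a h3 h h1 le_rfl h2 (pi a x) (pi a y) z).2.2
end

section
/- For every natural number γ and all syntax trees t_1 and t_2 on G'_γ with the same number of leaves, wordt_γ(t_1) = wordt_γ(t_2) if and only if t_1 and t_2 are related by the smallest equivalence relation on syntax trees that is closed under replacing, anywhere inside a tree (keeping the pending subtrees in the same left-to-right order), one side of a listed relation by the other, where the listed relations between two-internal-node patterns are: ⊥ ∘_1 ⊥ ∼ ⊥ ∘_2 ⊥; ⊣_a ∘_1 ⊥ ∼ ⊥ ∘_2 ⊣_a, ⊥ ∘_1 ⊢_a ∼ ⊢_a ∘_2 ⊥, ⊥ ∘_1 ⊣_a ∼ ⊥ ∘_2 ⊢_a for a ∈ {1,…,γ}; ⊣_a ∘_1 ⊢_{a'} ∼ ⊢_{a'} ∘_2 ⊣_a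 for a, a' ∈ {1,…,γ}; ⊣_a ∘_1 ⊣_b ∼ ⊣_a ∘_2 ⊢_b, ⊢_a ∘_1 ⊣_b ∼ ⊢_a ∘_2 ⊢_b, ⊣_b ∘_1 ⊣_a ∼ ⊣_a ∘_2 ⊣_b, ⊢_a ∘_1 ⊢_b ∼ ⊢_b ∘_2 ⊢_a for a < b in {1,…,γ}; ⊣_d ∘_1 ⊣_d ∼ ⊣_d ∘_2 ⊥ ∼ ⊣_d ∘_2 ⊣_c ∼ ⊣_d ∘_2 ⊢_c and ⊢_d ∘_1 ⊣_c ∼ ⊢_d ∘_1 ⊢_c ∼ ⊢_d ∘_1 ⊥ ∼ ⊢_d ∘_2 ⊢_d for c ≤ d in {1,…,γ}. (This is the combinatorial content of the presentation by generators and relations of the operad Trias_γ.) -/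
/-- Syntax trees on `G'_γ = {⊣_a, ⊢_a : a ∈ {1, …, γ}} ∪ {⊥}`: complete planar
binary trees whose internal nodes carry a label `⊣_a` (`dashv a`), `⊢_a`
(`vdash a`) or `⊥` (`bot`), the index `a : Fin γ` encoding the letter
`a + 1 ∈ {1, …, γ}`. -/
inductive TTree (γ : ℕ) : Type
  | leaf : TTree γ
  | dashv (a : Fin γ) (l r : TTree γ) : TTree γ
  | vdash (a : Fin γ) (l r : TTree γ) : TTree γ
  | bot (l r : TTree γ) : TTree γ

/-- `hA a` replaces every letter smaller than `a` by `a`. -/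
def hA (a : ℕ) (w : List ℕ) : List ℕ := w.map (fun b => max a b)

/-- The word associated with a syntax tree. -/
def wordtOf {γ : ℕ} : TTree γ → List ℕ
  | .leaf => [0]
  | .dashv a l r => wordtOf l ++ hA (a.val + 1) (wordtOf r)
  | .vdash a l r => hA (a.val + 1) (wordtOf l) ++ wordtOf r
  | .bot l r => wordtOf l ++ wordtOf r

/-- Number of leaves (the arity) of a syntax tree. -/
def nleaves {γ : ℕ} : TTree γ → ℕ
  | .leaf => 1
  | .dashv _ l r => nleaves l + nleaves r
  | .vdash _ l r => nleaves l + nleaves r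
  | .bot l r => nleaves l + nleaves r

/-- The listed relations between two-internal-node patterns (the space of
relations of the presentation of `Trias_γ`). -/
inductive RootRelT (γ : ℕ) : TTree γ → TTree γ → Prop
  | b1 (x y z : TTree γ) :
      RootRelT γ (.bot (.bot x y) z) (.bot x (.bot y z))
  | b2 (a : Fin γ) (x y z : TTree γ) :
      RootRelT γ (.dashv a (.bot x y) z) (.bot x (.dashv a y z))
  | b3 (a : Fin γ) (x y z : TTree γ) :
      RootRelT γ (.bot (.vdash a x y) z) (.vdash a x (.bot y z))
  | b4 (a : Fin γ) (x y z : TTree γ) :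
      RootRelT γ (.bot (.dashv a x y) z) (.bot x (.vdash a y z))
  | e1 (a a' : Fin γ) (x y z : TTree γ) :
      RootRelT γ (.dashv a (.vdash a' x y) z) (.vdash a' x (.dashv a y z))
  | e2 (a b : Fin γ) (h : a < b) (x y z : TTree γ) :
      RootRelT γ (.dashv a (.dashv b x y) z) (.dashv a x (.vdash b y z))
  | e3 (a b : Fin γ) (h : a < b) (x y z : TTree γ) :
      RootRelT γ (.vdash a (.dashv b x y) z) (.vdash a x (.vdash b y z))
  | e4 (a b : Fin γ) (h : a < b) (x y z : TTree γ) :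
      RootRelT γ (.dashv b (.dashv a x y) z) (.dashv a x (.dashv b y z))
  | e5 (a b : Fin γ) (h : a < b) (x y z : TTree γ) :
      RootRelT γ (.vdash a (.vdash b x y) z) (.vdash b x (.vdash a y z))
  | e6a (c d : Fin γ) (h : c ≤ d) (x y z : TTree γ) :
      RootRelT γ (.dashv d (.dashv d x y) z) (.dashv d x (.bot y z))
  | e6b (c d : Fin γ) (h : c ≤ d) (x y z : TTree γ) :
      RootRelT γ (.dashv d x (.bot y z)) (.dashv d x (.dashv c y z))
  | e6c (c d : Fin γ) (h : c ≤ d) (x y z : TTree γ) :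
      RootRelT γ (.dashv d x (.dashv c y z)) (.dashv d x (.vdash c y z))
  | e7a (c d : Fin γ) (h : c ≤ d) (x y z : TTree γ) :
      RootRelT γ (.vdash d (.dashv c x y) z) (.vdash d (.vdash c x y) z)
  | e7b (c d : Fin γ) (h : c ≤ d) (x y z : TTree γ) :
      RootRelT γ (.vdash d (.vdash c x y) z) (.vdash d (.bot x y) z)
  | e7c (c d : Fin γ) (h : c ≤ d) (x y z : TTree γ) :
      RootRelT γ (.vdash d (.bot x y) z) (.vdash d x (.vdash d y z))

/-- Replacement of one side of a listed relation by the other, anywhere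
inside a tree. -/
inductive CongT (γ : ℕ) : TTree γ → TTree γ → Prop
  | here {s t : TTree γ} : RootRelT γ s t → CongT γ s t
  | dashvL (a : Fin γ) {s s' : TTree γ} (r : TTree γ) :
      CongT γ s s' → CongT γ (.dashv a s r) (.dashv a s' r)
  | dashvR (a : Fin γ) (l : TTree γ) {s s' : TTree γ} :
      CongT γ s s' → CongT γ (.dashv a l s) (.dashv a l s')
  | vdashL (a : Fin γ) {s s' : TTree γ} (r : TTree γ) :
      CongT γ s s' → CongT γ (.vdash a s r) (.vdash a s' r)
  | vdashR (a : Fin γ) (l : TTree γ) {s s' : TTree γ} :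
      CongT γ s s' → CongT γ (.vdash a l s) (.vdash a l s')
  | botL {s s' : TTree γ} (r : TTree γ) :
      CongT γ s s' → CongT γ (.bot s r) (.bot s' r)
  | botR (l : TTree γ) {s s' : TTree γ} :
      CongT γ s s' → CongT γ (.bot l s) (.bot l s')


namespace TriasAux

variable {γ : ℕ}

abbrev Eqv (γ : ℕ) := Relation.EqvGen (CongT γ)

lemma eqv_rel {s t : TTree γ} (h : RootRelT γ s t) : Eqv γ s t :=
  Relation.EqvGen.rel _ _ (CongT.here h)

lemma eqv_lift (f : TTree γ → TTree γ)
    (hf : ∀ a b : TTree γ, CongT γ a b → CongT γ (f a) (f b)) {a b : TTree γ}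
    (h : Eqv γ a b) : Eqv γ (f a) (f b) := by
  induction h with
  | rel _ _ h => exact .rel _ _ (hf _ _ h)
  | refl _ => exact .refl _
  | symm _ _ _ ih => exact .symm _ _ ih
  | trans _ _ _ _ _ ih1 ih2 => exact .trans _ _ _ ih1 ih2

/-! ### words -/

lemma hA_append (a : ℕ) (u v : List ℕ) : hA a (u ++ v) = hA a u ++ hA a v :=
  List.map_append

lemma hA_hA (a b : ℕ) (w : List ℕ) : hA a (hA b w) = hA (max a b) w := by
  simp only [hA, List.map_map]
  exact List.map_congr_left fun c _ => by simp [Function.comp]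

lemma word_rootrel {s t : TTree γ} (h : RootRelT γ s t) : wordtOf s = wordtOf t := by
  cases h with
  | b1 => simp [wordtOf]
  | b2 => simp [wordtOf, hA_append]
  | b3 => simp [wordtOf]
  | b4 => simp [wordtOf, hA_append]
  | e1 => simp [wordtOf, hA_append]
  | e2 a b h x y z =>
    have hh : a.1 < b.1 := h
    have hm : max (a.1+1) (b.1+1) = b.1+1 := by omega
    simp [wordtOf, hA_append, hA_hA, hm]
  | e3 a b h x y z =>
    have hh : a.1 < b.1 := h
    have hm : max (a.1+1) (b.1+1) = b.1+1 := by omega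
    simp [wordtOf, hA_append, hA_hA, hm]
  | e4 a b h x y z =>
    have hh : a.1 < b.1 := h
    have hm : max (a.1+1) (b.1+1) = b.1+1 := by omega
    simp [wordtOf, hA_append, hA_hA, hm]
  | e5 a b h x y z =>
    have hh : a.1 < b.1 := h
    have hm : max (a.1+1) (b.1+1) = b.1+1 := by omega
    simp [wordtOf, hA_append, hA_hA, hm]
  | e6a c d h x y z => simp [wordtOf, hA_append]
  | e6b c d h x y z =>
    have hh : c.1 ≤ d.1 := h
    have hm : max (d.1+1) (c.1+1) = d.1+1 := by omega
    simp [wordtOf, hA_append, hA_hA, hm]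
  | e6c c d h x y z =>
    have hh : c.1 ≤ d.1 := h
    have hm : max (d.1+1) (c.1+1) = d.1+1 := by omega
    simp [wordtOf, hA_append, hA_hA, hm]
  | e7a c d h x y z =>
    have hh : c.1 ≤ d.1 := h
    have hm : max (d.1+1) (c.1+1) = d.1+1 := by omega
    simp [wordtOf, hA_append, hA_hA, hm]
  | e7b c d h x y z =>
    have hh : c.1 ≤ d.1 := h
    have hm : max (d.1+1) (c.1+1) = d.1+1 := by omega
    simp [wordtOf, hA_append, hA_hA, hm]
  | e7c c d h x y z => simp [wordtOf, hA_append]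

lemma word_cong {s t : TTree γ} (h : CongT γ s t) : wordtOf s = wordtOf t := by
  induction h with
  | here h => exact word_rootrel h
  | dashvL a r _ ih => simp [wordtOf, ih]
  | dashvR a l _ ih => simp [wordtOf, ih]
  | vdashL a r _ ih => simp [wordtOf, ih]
  | vdashR a l _ ih => simp [wordtOf, ih]
  | botL r _ ih => simp [wordtOf, ih]
  | botR l _ ih => simp [wordtOf, ih]

lemma word_eqv {s t : TTree γ} (h : Eqv γ s t) : wordtOf s = wordtOf t := by
  induction h with
  | rel _ _ h => exact word_cong h
  | refl _ => rfl
  | symm _ _ _ ih => exact ih.symm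
  | trans _ _ _ _ _ ih1 ih2 => exact ih1.trans ih2

lemma zero_mem_word (t : TTree γ) : 0 ∈ wordtOf t := by
  induction t with
  | leaf => simp [wordtOf]
  | dashv a l r ihl ihr => simp only [wordtOf, List.mem_append]; exact Or.inl ihl
  | vdash a l r ihl ihr => simp only [wordtOf, List.mem_append]; exact Or.inr ihr
  | bot l r ihl ihr => simp only [wordtOf, List.mem_append]; exact Or.inl ihl

lemma word_ne_nil (t : TTree γ) : wordtOf t ≠ [] :=
  fun h => by simpa [h] using zero_mem_word t

lemma word_le (t : TTree γ) : ∀ b ∈ wordtOf t, b ≤ γ := by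
  induction t with
  | leaf => simp [wordtOf]
  | dashv a l r ihl ihr =>
    intro b hb
    simp only [wordtOf, List.mem_append, hA, List.mem_map] at hb
    rcases hb with hb | ⟨c, hc, rfl⟩
    · exact ihl b hb
    · have := ihr c hc
      have := a.isLt
      omega
  | vdash a l r ihl ihr =>
    intro b hb
    simp only [wordtOf, List.mem_append, hA, List.mem_map] at hb
    rcases hb with ⟨c, hc, rfl⟩ | hb
    · have := ihl c hc
      have := a.isLt
      omega
    · exact ihr b hb
  | bot l r ihl ihr =>
    intro b hb
    simp only [wordtOf, List.mem_append] at hb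
    rcases hb with hb | hb
    · exact ihl b hb
    · exact ihr b hb

/-! ### labels and rotation to leaf-left form -/

inductive Lab (γ : ℕ) : Type
  | B : Lab γ
  | D (a : Fin γ) : Lab γ
  | V (a : Fin γ) : Lab γ

def Lab.ap : Lab γ → TTree γ → TTree γ → TTree γ
  | .B, l, r => .bot l r
  | .D a, l, r => .dashv a l r
  | .V a, l, r => .vdash a l r

lemma rootStep (g g' : Lab γ) (u v z : TTree γ) :
    ∃ g1 g2 : Lab γ, Eqv γ (g.ap (g'.ap u v) z) (g1.ap u (g2.ap v z)) := by
  cases g with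
  | B =>
    cases g' with
    | B => exact ⟨.B, .B, eqv_rel (.b1 u v z)⟩
    | D a => exact ⟨.B, .V a, eqv_rel (.b4 a u v z)⟩
    | V a => exact ⟨.V a, .B, eqv_rel (.b3 a u v z)⟩
  | D a =>
    cases g' with
    | B => exact ⟨.B, .D a, eqv_rel (.b2 a u v z)⟩
    | V a' => exact ⟨.V a', .D a, eqv_rel (.e1 a a' u v z)⟩
    | D b =>
      rcases lt_trichotomy a b with h | h | h
      · exact ⟨.D a, .V b, eqv_rel (.e2 a b h u v z)⟩
      · subst h; exact ⟨.D a, .B, eqv_rel (.e6a a a le_rfl u v z)⟩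
      · exact ⟨.D b, .D a, eqv_rel (.e4 b a h u v z)⟩
  | V a =>
    cases g' with
    | B => exact ⟨.V a, .V a, eqv_rel (.e7c a a le_rfl u v z)⟩
    | D b =>
      rcases lt_or_ge a b with h | h
      · exact ⟨.V a, .V b, eqv_rel (.e3 a b h u v z)⟩
      · exact ⟨.V a, .V a, .trans _ _ _ (eqv_rel (.e7a b a h u v z))
          (.trans _ _ _ (eqv_rel (.e7b b a h u v z)) (eqv_rel (.e7c b a h u v z)))⟩
    | V b =>
      rcases lt_or_ge a b with h | h
      · exact ⟨.V b, .V a, eqv_rel (.e5 a b h u v z)⟩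
      · exact ⟨.V a, .V a, .trans _ _ _ (eqv_rel (.e7b b a h u v z))
          (eqv_rel (.e7c b a h u v z))⟩

lemma rotToLeafLeft : ∀ (t1 : TTree γ) (g : Lab γ) (t2 : TTree γ),
    ∃ (g' : Lab γ) (t' : TTree γ), Eqv γ (g.ap t1 t2) (g'.ap .leaf t') := by
  intro t1
  induction t1 with
  | leaf => intro g t2; exact ⟨g, t2, .refl _⟩
  | dashv a u v ihu ihv =>
    intro g t2
    obtain ⟨g1, g2, h⟩ := rootStep g (.D a) u v t2
    obtain ⟨g', t', h'⟩ := ihu g1 (g2.ap v t2)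
    exact ⟨g', t', .trans _ _ _ h h'⟩
  | vdash a u v ihu ihv =>
    intro g t2
    obtain ⟨g1, g2, h⟩ := rootStep g (.V a) u v t2
    obtain ⟨g', t', h'⟩ := ihu g1 (g2.ap v t2)
    exact ⟨g', t', .trans _ _ _ h h'⟩
  | bot u v ihu ihv =>
    intro g t2
    obtain ⟨g1, g2, h⟩ := rootStep g .B u v t2
    obtain ⟨g', t', h'⟩ := ihu g1 (g2.ap v t2)
    exact ⟨g', t', .trans _ _ _ h h'⟩

/-! ### flattening -/

def flatW (m : ℕ) (w : List ℕ) : List ℕ := w.map fun b => if b ≤ m then 0 else b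

def reduceW (m : ℕ) (w : List ℕ) : List ℕ := w.map fun b => if b = m then 0 else b

lemma reduceW_hA (m : ℕ) (w : List ℕ) : reduceW m (hA m w) = flatW m w := by
  simp only [reduceW, hA, flatW, List.map_map]
  exact List.map_congr_left fun c _ => by
    simp only [Function.comp]
    split_ifs <;> omega

def flatT (a : Fin γ) : TTree γ → TTree γ
  | .leaf => .leaf
  | .bot l r => .bot (flatT a l) (flatT a r)
  | .dashv b l r => if b ≤ a then .bot (flatT a l) (flatT a r) else .dashv b (flatT a l) r
  | .vdash b l r => if b ≤ a then .bot (flatT a l) (flatT a r) else .vdash b l (flatT a r)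

lemma flatW_append (m : ℕ) (u v : List ℕ) :
    flatW m (u ++ v) = flatW m u ++ flatW m v := List.map_append

lemma flatW_hA_le {m c : ℕ} (h : c ≤ m) (w : List ℕ) : flatW m (hA c w) = flatW m w := by
  simp only [flatW, hA, List.map_map]
  exact List.map_congr_left fun b _ => by
    simp only [Function.comp]
    split_ifs <;> omega

lemma flatW_hA_gt {m c : ℕ} (h : m < c) (w : List ℕ) : flatW m (hA c w) = hA c w := by
  simp only [flatW, hA, List.map_map]
  exact List.map_congr_left fun b _ => by
    simp only [Function.comp]
    split_ifs <;> omega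

lemma word_flatT (a : Fin γ) (t : TTree γ) :
    wordtOf (flatT a t) = flatW (a.1 + 1) (wordtOf t) := by
  induction t with
  | leaf => simp [flatT, wordtOf, flatW]
  | bot l r ihl ihr => simp [flatT, wordtOf, flatW_append, ihl, ihr]
  | dashv b l r ihl ihr =>
    by_cases hba : b ≤ a
    · have : b.1 + 1 ≤ a.1 + 1 := by have : b.1 ≤ a.1 := hba; omega
      simp [flatT, hba, wordtOf, flatW_append, flatW_hA_le this, ihl, ihr]
    · have hab : a.1 < b.1 := not_le.mp hba
      have : a.1 + 1 < b.1 + 1 := by omega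
      simp [flatT, hba, wordtOf, flatW_append, flatW_hA_gt this, ihl]
  | vdash b l r ihl ihr =>
    by_cases hba : b ≤ a
    · have : b.1 + 1 ≤ a.1 + 1 := by have : b.1 ≤ a.1 := hba; omega
      simp [flatT, hba, wordtOf, flatW_append, flatW_hA_le this, ihl, ihr]
    · have hab : a.1 < b.1 := not_le.mp hba
      have : a.1 + 1 < b.1 + 1 := by omega
      simp [flatT, hba, wordtOf, flatW_append, flatW_hA_gt this, ihr]

lemma eqv_bot_aux (a : Fin γ) (l r l' r' : TTree γ)
    (hl : ∀ x : TTree γ, Eqv γ (.dashv a x l) (.dashv a x l'))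
    (hr : ∀ x : TTree γ, Eqv γ (.dashv a x r) (.dashv a x r')) (x : TTree γ) :
    Eqv γ (.dashv a x (.bot l r)) (.dashv a x (.bot l' r')) := by
  have s1 : Eqv γ (.dashv a x (.bot l r)) (.dashv a (.dashv a x l) r) :=
    .symm _ _ (eqv_rel (.e6a a a le_rfl x l r))
  have s2 : Eqv γ (.dashv a (.dashv a x l) r) (.dashv a (.dashv a x l') r) :=
    eqv_lift (fun s => .dashv a s r) (fun _ _ h => .dashvL a r h) (hl x)
  have s3 := hr (.dashv a x l')
  have s4 : Eqv γ (.dashv a (.dashv a x l') r') (.dashv a x (.bot l' r')) :=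
    eqv_rel (.e6a a a le_rfl x l' r')
  exact .trans _ _ _ s1 (.trans _ _ _ s2 (.trans _ _ _ s3 s4))

lemma eqv_flatT (a : Fin γ) : ∀ t x : TTree γ,
    Eqv γ (.dashv a x t) (.dashv a x (flatT a t)) := by
  intro t
  induction t with
  | leaf => intro x; exact .refl _
  | bot l r ihl ihr =>
    intro x
    exact eqv_bot_aux a l r _ _ ihl ihr x
  | dashv b l r ihl ihr =>
    intro x
    by_cases hba : b ≤ a
    · have s0 : Eqv γ (.dashv a x (.dashv b l r)) (.dashv a x (.bot l r)) :=
        .symm _ _ (eqv_rel (.e6b b a hba x l r))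
      have s1 := eqv_bot_aux a l r _ _ ihl ihr x
      simp only [flatT, if_pos hba]
      exact .trans _ _ _ s0 s1
    · have hab : a < b := not_le.mp hba
      have s1 : Eqv γ (.dashv a x (.dashv b l r)) (.dashv b (.dashv a x l) r) :=
        .symm _ _ (eqv_rel (.e4 a b hab x l r))
      have s2 : Eqv γ (.dashv b (.dashv a x l) r) (.dashv b (.dashv a x (flatT a l)) r) :=
        eqv_lift (fun s => .dashv b s r) (fun _ _ h => .dashvL b r h) (ihl x)
      have s3 : Eqv γ (.dashv b (.dashv a x (flatT a l)) r)
          (.dashv a x (.dashv b (flatT a l) r)) := eqv_rel (.e4 a b hab x (flatT a l) r)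
      simp only [flatT, if_neg hba]
      exact .trans _ _ _ s1 (.trans _ _ _ s2 s3)
  | vdash b l r ihl ihr =>
    intro x
    by_cases hba : b ≤ a
    · have s0 : Eqv γ (.dashv a x (.vdash b l r)) (.dashv a x (.dashv b l r)) :=
        .symm _ _ (eqv_rel (.e6c b a hba x l r))
      have s0' : Eqv γ (.dashv a x (.dashv b l r)) (.dashv a x (.bot l r)) :=
        .symm _ _ (eqv_rel (.e6b b a hba x l r))
      have s1 := eqv_bot_aux a l r _ _ ihl ihr x
      simp only [flatT, if_pos hba]
      exact .trans _ _ _ s0 (.trans _ _ _ s0' s1)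
    · have hab : a < b := not_le.mp hba
      have s1 : Eqv γ (.dashv a x (.vdash b l r)) (.dashv a (.dashv b x l) r) :=
        .symm _ _ (eqv_rel (.e2 a b hab x l r))
      have s2 := ihr (.dashv b x l)
      have s3 : Eqv γ (.dashv a (.dashv b x l) (flatT a r))
          (.dashv a x (.vdash b l (flatT a r))) := eqv_rel (.e2 a b hab x l (flatT a r))
      simp only [flatT, if_neg hba]
      exact .trans _ _ _ s1 (.trans _ _ _ s2 s3)

/-! ### canonical form -/

def mymin : List ℕ → ℕ
  | [] => 0
  | [x] => x
  | x :: y :: t => min x (mymin (y :: t))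

lemma mymin_eq {m : ℕ} : ∀ {l : List ℕ}, m ∈ l → (∀ b ∈ l, m ≤ b) → mymin l = m := by
  intro l
  induction l with
  | nil => intro h; simp at h
  | cons x t ih =>
    intro hmem hle
    cases t with
    | nil =>
      simp at hmem
      simp [mymin, hmem]
    | cons y s =>
      have hx : m ≤ x := hle x (by simp)
      rcases List.mem_cons.mp hmem with rfl | hmem'
      · have : mymin (y :: s) = m ∨ m ≤ mymin (y :: s) := by
          by_cases hm : m ∈ (y :: s)
          · exact Or.inl (ih hm (fun b hb => hle b (List.mem_cons_of_mem _ hb)))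
          · right
            clear ih hmem
            have hle' : ∀ b ∈ (y :: s), m ≤ b := fun b hb => hle b (List.mem_cons_of_mem _ hb)
            clear hle hm
            induction s generalizing y with
            | nil => simpa [mymin] using hle' y (by simp)
            | cons z s' ih' =>
              have h1 : m ≤ y := hle' y (by simp)
              have h2 := ih' z (fun b hb => hle' b (List.mem_cons_of_mem _ hb))
              simp only [mymin]
              omega
        rcases this with h | h <;> simp [mymin, h] <;> omega
      · have h1 : mymin (y :: s) = m := ih hmem' (fun b hb => hle b (List.mem_cons_of_mem _ hb))
        simp [mymin, h1]
        omega

def canT (γ : ℕ) : List ℕ → TTree γ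
  | [] => .leaf
  | [_] => .leaf
  | x :: y :: rest =>
      if x = 0 then
        if 0 ∈ y :: rest then .bot .leaf (canT γ (y :: rest))
        else if h : mymin (y :: rest) - 1 < γ then
          .dashv ⟨mymin (y :: rest) - 1, h⟩ .leaf
            (canT γ (reduceW (mymin (y :: rest)) (y :: rest)))
        else .leaf
      else if h : x - 1 < γ then .vdash ⟨x - 1, h⟩ .leaf (canT γ (y :: rest))
      else .leaf
termination_by l => l.length
decreasing_by
  · simp
  · simp [reduceW]
  · simp

lemma canT_single (x : ℕ) : canT γ [x] = .leaf := by rw [canT]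

lemma canT_bot {w : List ℕ} (hw : w ≠ []) (h0 : 0 ∈ w) :
    canT γ (0 :: w) = .bot .leaf (canT γ w) := by
  obtain ⟨y, rest, rfl⟩ := List.exists_cons_of_ne_nil hw
  rw [canT]
  simp [h0]

lemma canT_vdash {x : ℕ} {w : List ℕ} (hw : w ≠ []) (hx : x ≠ 0) (h : x - 1 < γ) :
    canT γ (x :: w) = .vdash ⟨x - 1, h⟩ .leaf (canT γ w) := by
  obtain ⟨y, rest, rfl⟩ := List.exists_cons_of_ne_nil hw
  rw [canT]
  simp [hx, h]

lemma canT_dashv {w : List ℕ} (hw : w ≠ []) (h0 : 0 ∉ w) (h : mymin w - 1 < γ) :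
    canT γ (0 :: w) = .dashv ⟨mymin w - 1, h⟩ .leaf (canT γ (reduceW (mymin w) w)) := by
  obtain ⟨y, rest, rfl⟩ := List.exists_cons_of_ne_nil hw
  rw [canT]
  simp [h0, h]

lemma to_can_node (n : ℕ)
    (ih : ∀ t : TTree γ, (wordtOf t).length ≤ n → Eqv γ t (canT γ (wordtOf t)))
    (g : Lab γ) (t1 t2 : TTree γ)
    (ht : (wordtOf (g.ap t1 t2)).length ≤ n + 1) :
    Eqv γ (g.ap t1 t2) (canT γ (wordtOf (g.ap t1 t2))) := by
  obtain ⟨g', t', heqv⟩ := rotToLeafLeft t1 g t2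
  have hw : wordtOf (g.ap t1 t2) = wordtOf (g'.ap .leaf t') := word_eqv heqv
  rw [hw] at ht ⊢
  refine .trans _ _ _ heqv ?_
  have hne := word_ne_nil t'
  cases g' with
  | B =>
    have hwb : wordtOf (Lab.ap .B .leaf t') = 0 :: wordtOf t' := by
      simp [Lab.ap, wordtOf]
    rw [hwb] at ht ⊢
    rw [canT_bot hne (zero_mem_word t')]
    exact eqv_lift (fun s => .bot .leaf s) (fun _ _ h => .botR _ h)
      (ih t' (by simpa using ht))
  | V a =>
    have hwv : wordtOf (Lab.ap (.V a) .leaf t') = (a.1 + 1) :: wordtOf t' := by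
      simp [Lab.ap, wordtOf, hA]
    rw [hwv] at ht ⊢
    have hlt : a.1 + 1 - 1 < γ := by simpa using a.isLt
    rw [canT_vdash hne (by omega) hlt]
    rw [show (⟨a.1 + 1 - 1, hlt⟩ : Fin γ) = a from Fin.ext (by simp)]
    exact eqv_lift (fun s => .vdash a .leaf s) (fun _ _ h => .vdashR a _ h)
      (ih t' (by simpa using ht))
  | D a =>
    obtain ⟨y, rest, hw'⟩ := List.exists_cons_of_ne_nil hne
    have hwd : wordtOf (Lab.ap (.D a) .leaf t') = 0 :: hA (a.1 + 1) (wordtOf t') := by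
      simp [Lab.ap, wordtOf]
    rw [hwd] at ht ⊢
    have hne2 : hA (a.1 + 1) (wordtOf t') ≠ [] := by simp [hA, hw']
    have h0 : 0 ∉ hA (a.1 + 1) (wordtOf t') := by
      simp only [hA, List.mem_map]
      rintro ⟨c, hc, hmax⟩
      omega
    have hmin : mymin (hA (a.1 + 1) (wordtOf t')) = a.1 + 1 := by
      apply mymin_eq
      · simp only [hA, List.mem_map]
        exact ⟨0, zero_mem_word t', by simp⟩
      · simp only [hA, List.mem_map]
        rintro b ⟨c, hc, rfl⟩
        omega
    have hlt : mymin (hA (a.1 + 1) (wordtOf t')) - 1 < γ := by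
      rw [hmin]; simpa using a.isLt
    rw [canT_dashv hne2 h0 hlt]
    have hred : reduceW (mymin (hA (a.1 + 1) (wordtOf t'))) (hA (a.1 + 1) (wordtOf t'))
        = wordtOf (flatT a t') := by
      rw [hmin, reduceW_hA, word_flatT]
    rw [hred]
    rw [show (⟨mymin (hA (a.1 + 1) (wordtOf t')) - 1, hlt⟩ : Fin γ) = a from
      Fin.ext (by simp [hmin])]
    refine .trans _ _ _ (eqv_flatT a t' .leaf) ?_
    refine eqv_lift (fun s => .dashv a .leaf s) (fun _ _ h => .dashvR a _ h)
      (ih (flatT a t') ?_)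
    have hlen : (wordtOf (flatT a t')).length = (wordtOf t').length := by
      simp [word_flatT, flatW]
    simp only [List.length_cons, hA, List.length_map] at ht
    omega

lemma to_can : ∀ (n : ℕ) (t : TTree γ), (wordtOf t).length ≤ n →
    Eqv γ t (canT γ (wordtOf t)) := by
  intro n
  induction n with
  | zero =>
    intro t ht
    exact absurd (List.length_eq_zero_iff.mp (Nat.le_zero.mp ht)) (word_ne_nil t)
  | succ n ih =>
    intro t ht
    cases t with
    | leaf =>
      show Eqv γ .leaf (canT γ [0])
      rw [canT_single]
      exact .refl _
    | dashv a l r => exact to_can_node n ih (.D a) l r ht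
    | vdash a l r => exact to_can_node n ih (.V a) l r ht
    | bot l r => exact to_can_node n ih .B l r ht

end TriasAux
/-- Two syntax trees with the same number of leaves have the same image under
`wordt_γ` if and only if they are equivalent modulo the relations of the
presentation of `Trias_γ`. -/
theorem stmt19 (γ : ℕ) (t₁ t₂ : TTree γ) (h : nleaves t₁ = nleaves t₂) :
    wordtOf t₁ = wordtOf t₂ ↔ Relation.EqvGen (CongT γ) t₁ t₂ := by
  constructor
  · intro hw
    have h1 := TriasAux.to_can (γ := γ) (wordtOf t₁).length t₁ le_rfl
    have h2 := TriasAux.to_can (γ := γ) (wordtOf t₂).length t₂ le_rfl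
    rw [hw] at h1
    exact .trans _ _ _ h1 (.symm _ _ h2)
  · exact TriasAux.word_eqv
end
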